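/- Under the admissible-error assumption γ·|G^π(s,a)| ≤ λ·u(s,a), let π̂ maximize the penalized return η_{M̃} and for δ ≥ δ_min := min_π ε_u(π), let π^δ be a maximizer of η_M over {π : ε_u(π) ≤ δ}. Then η_M(π̂) ≥ η_M(π^δ) − 2λδ. -/

import Mathlib

open scoped BigOperators
open Filter Topology Classical

section MDP

variable {S A : Type*} [Fintype S] [Fintype A]

/-- π is a valid stochastic policy. -/
def IsPolicy (π : S → A → ℝ) : Prop :=
  (∀ s a, 0 ≤ π s a) ∧ ∀ s, ∑ a, π s a = 1

/-- T is a valid transition kernel. -/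
def IsKernel (T : S → A → S → ℝ) : Prop :=
  (∀ s a s', 0 ≤ T s a s') ∧ ∀ s a, ∑ s', T s a s' = 1

/-- μ is a probability distribution on states. -/
def IsDist (μ : S → ℝ) : Prop :=
  (∀ s, 0 ≤ μ s) ∧ ∑ s, μ s = 1

/-- Distribution of the state at time t under policy π and dynamics T, from μ0. -/
def stateDist (T : S → A → S → ℝ) (π : S → A → ℝ) (μ0 : S → ℝ) : ℕ → S → ℝ
  | 0 => μ0
  | t + 1 => fun s' => ∑ s, ∑ a, stateDist T π μ0 t s * π s a * T s a s'

/-- Unnormalized discounted occupancy measure ρ^π_T(s,a). -/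
noncomputable def occupancy (γ : ℝ) (T : S → A → S → ℝ) (π : S → A → ℝ)
    (μ0 : S → ℝ) (s : S) (a : A) : ℝ :=
  π s a * ∑' t : ℕ, γ ^ t * stateDist T π μ0 t s

/-- Improper expectation Ē of f with respect to the occupancy measure. -/
noncomputable def expOcc (γ : ℝ) (T : S → A → S → ℝ) (π : S → A → ℝ)
    (μ0 : S → ℝ) (f : S → A → ℝ) : ℝ :=
  ∑ s, ∑ a, occupancy γ T π μ0 s a * f s a

/-- Expected discounted return η_M(π). -/
noncomputable def ret (γ : ℝ) (T : S → A → S → ℝ) (π : S → A → ℝ)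
    (μ0 : S → ℝ) (r : S → A → ℝ) : ℝ :=
  ∑' t : ℕ, γ ^ t * ∑ s, ∑ a, stateDist T π μ0 t s * π s a * r s a

/-- Value function V_M^π(s): return starting from the Dirac distribution at s. -/
noncomputable def value (γ : ℝ) (T : S → A → S → ℝ) (π : S → A → ℝ)
    (r : S → A → ℝ) (s0 : S) : ℝ :=
  ret γ T π (fun s => if s = s0 then 1 else 0) r

/-- G^π(s,a) = E_{s'∼T̂(s,a)}[V_M^π(s')] − E_{s'∼T(s,a)}[V_M^π(s')]. -/
noncomputable def Gpi (γ : ℝ) (T Th : S → A → S → ℝ) (π : S → A → ℝ)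
    (r : S → A → ℝ) (s : S) (a : A) : ℝ :=
  (∑ s', Th s a s' * value γ T π r s') - ∑ s', T s a s' * value γ T π r s'

/-- Total variation distance between two distributions on a finite set. -/
noncomputable def tvDist (P Q : S → ℝ) : ℝ :=
  ⨆ E : Finset S, |(∑ s ∈ E, P s) - ∑ s ∈ E, Q s|

/-- Integral probability metric induced by a function class F. -/
noncomputable def ipm (F : Set (S → ℝ)) (P Q : S → ℝ) : ℝ :=
  sSup {x : ℝ | ∃ f ∈ F, x = |(∑ s, P s * f s) - ∑ s, Q s * f s|}

/-! The value function `V` of `π` under the true dynamics `T` is a fixed point of the Bellman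
operator of the model `T̂` with the corrected reward `r - γ G^π`. Unrolling that fixed-point
equation along the state distributions of the model gives the simulation lemma
`η_M(π) = Ē_{ρ^π_{T̂}}[r - γ G^π]`, so admissibility yields
`|η_M(π) - Ē_{ρ^π_{T̂}}[r]| ≤ λ ε_u(π)`. Hence
`η_M(π̂) ≥ η_{M̃}(π̂) ≥ η_{M̃}(π^δ) ≥ η_M(π^δ) - 2λ ε_u(π^δ) ≥ η_M(π^δ) - 2λδ`. -/

theorem hasSum_pow_mul_of_eq_add_mul_succ {γ C : ℝ} (hγ0 : 0 ≤ γ) (hγ1 : γ < 1)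
    {W a : ℕ → ℝ} (hW : ∀ t, W t = a t + γ * W (t + 1)) (hWC : ∀ t, |W t| ≤ C)
    (ha : Summable fun t => γ ^ t * a t) :
    HasSum (fun t => γ ^ t * a t) (W 0) := by
  have htel : ∀ t, γ ^ t * a t = γ ^ t * W t - γ ^ (t + 1) * W (t + 1) := fun t => by
    rw [hW t, pow_succ]; ring
  have htail : Tendsto (fun N => γ ^ N * W N) atTop (𝓝 0) := by
    refine squeeze_zero_norm (fun N => ?_)
      (by simpa using (tendsto_pow_atTop_nhds_zero_of_lt_one hγ0 hγ1).mul_const C)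
    rw [Real.norm_eq_abs, abs_mul, abs_of_nonneg (pow_nonneg hγ0 N)]
    exact mul_le_mul_of_nonneg_left (hWC N) (pow_nonneg hγ0 N)
  rw [ha.hasSum_iff_tendsto_nat]
  simp_rw [htel, Finset.sum_range_sub' (fun t => γ ^ t * W t)]
  simpa using (tendsto_const_nhds (x := W 0)).sub htail

theorem abs_sum_mul_le_sum_abs {ι : Type*} [Fintype ι] {p g : ι → ℝ}
    (hp0 : ∀ i, 0 ≤ p i) (hp1 : ∀ i, p i ≤ 1) :
    |∑ i, p i * g i| ≤ ∑ i, |g i| :=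
  (Finset.abs_sum_le_sum_abs _ _).trans <| Finset.sum_le_sum fun i _ => by
    rw [abs_mul, abs_of_nonneg (hp0 i)]
    exact mul_le_of_le_one_left (abs_nonneg _) (hp1 i)

section

variable {T Th : S → A → S → ℝ} {π : S → A → ℝ} {μ0 : S → ℝ} {γ : ℝ}

theorem isDist_indicator (s0 : S) : IsDist (fun s : S => if s = s0 then (1 : ℝ) else 0) :=
  ⟨fun _ => ite_nonneg zero_le_one le_rfl, by simp⟩

theorem stateDist_nonneg (hT : IsKernel T) (hπ : IsPolicy π) (hμ : ∀ s, 0 ≤ μ0 s) :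
    ∀ t s, 0 ≤ stateDist T π μ0 t s
  | 0 => hμ
  | t + 1 => fun s' => Finset.sum_nonneg fun s _ => Finset.sum_nonneg fun a _ =>
      mul_nonneg (mul_nonneg (stateDist_nonneg hT hπ hμ t s) (hπ.1 s a)) (hT.1 s a s')

theorem sum_stateDist (hT : IsKernel T) (hπ : IsPolicy π) :
    ∀ t, ∑ s, stateDist T π μ0 t s = ∑ s, μ0 s
  | 0 => rfl
  | t + 1 => calc
      ∑ s', ∑ s, ∑ a, stateDist T π μ0 t s * π s a * T s a s'
        = ∑ s, ∑ a, ∑ s', stateDist T π μ0 t s * π s a * T s a s' := by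
          rw [Finset.sum_comm]; exact Finset.sum_congr rfl fun s _ => Finset.sum_comm
      _ = ∑ s, stateDist T π μ0 t s := by
          simp only [← Finset.mul_sum, hT.2, hπ.2, mul_one]
      _ = ∑ s, μ0 s := sum_stateDist hT hπ t

theorem stateDist_le_one (hT : IsKernel T) (hπ : IsPolicy π) (hμ : IsDist μ0) (t : ℕ) (s : S) :
    stateDist T π μ0 t s ≤ 1 :=
  (sum_stateDist hT hπ t ▸ hμ.2) ▸
    Finset.single_le_sum (fun s _ => stateDist_nonneg hT hπ hμ.1 t s) (Finset.mem_univ s)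

theorem summable_pow_mul_stateDist (hT : IsKernel T) (hπ : IsPolicy π) (hμ : IsDist μ0)
    (hγ0 : 0 ≤ γ) (hγ1 : γ < 1) (s : S) :
    Summable fun t => γ ^ t * stateDist T π μ0 t s :=
  (summable_geometric_of_lt_one hγ0 hγ1).of_nonneg_of_le
    (fun t => mul_nonneg (pow_nonneg hγ0 t) (stateDist_nonneg hT hπ hμ.1 t s))
    (fun t => mul_le_of_le_one_right (pow_nonneg hγ0 t) (stateDist_le_one hT hπ hμ t s))

theorem hasSum_expOcc (hT : IsKernel T) (hπ : IsPolicy π) (hμ : IsDist μ0)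
    (hγ0 : 0 ≤ γ) (hγ1 : γ < 1) (f : S → A → ℝ) :
    HasSum (fun t => γ ^ t * ∑ s, ∑ a, stateDist T π μ0 t s * π s a * f s a)
      (expOcc γ T π μ0 f) := by
  have hlimit : expOcc γ T π μ0 f
      = ∑ s, ∑ a, (∑' t, γ ^ t * stateDist T π μ0 t s) * (π s a * f s a) :=
    Finset.sum_congr rfl fun s _ => Finset.sum_congr rfl fun a _ => by rw [occupancy]; ring
  rw [hlimit]
  refine (hasSum_sum fun s _ => hasSum_sum fun a _ =>
    (summable_pow_mul_stateDist hT hπ hμ hγ0 hγ1 s).hasSum.mul_right _).congr_fun fun t => ?_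
  simp only [Finset.mul_sum]
  exact Finset.sum_congr rfl fun s _ => Finset.sum_congr rfl fun a _ => by ring

theorem stateDist_succ_eq_stateDist_one (t : ℕ) :
    stateDist T π μ0 (t + 1) = stateDist T π (stateDist T π μ0 1) t := by
  induction t with
  | zero => rfl
  | succ t ih =>
    conv_lhs => rw [stateDist, ih]
    rfl

theorem stateDist_eq_sum_indicator (t : ℕ) (s : S) :
    stateDist T π μ0 t s
      = ∑ s0, μ0 s0 * stateDist T π (fun s => if s = s0 then 1 else 0) t s := by
  induction t generalizing s with
  | zero => simp [stateDist]
  | succ t ih =>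
    simp only [stateDist, ih, Finset.sum_mul, Finset.mul_sum, mul_assoc]
    rw [Finset.sum_congr rfl fun x _ => Finset.sum_comm, Finset.sum_comm]

theorem ret_eq_sum_mul_value (hT : IsKernel T) (hπ : IsPolicy π) (hγ0 : 0 ≤ γ) (hγ1 : γ < 1)
    (r : S → A → ℝ) :
    ret γ T π μ0 r = ∑ s0, μ0 s0 * value γ T π r s0 := by
  refine ((hasSum_sum fun s0 _ => ((hasSum_expOcc hT hπ (isDist_indicator s0) hγ0 hγ1
    r).summable.hasSum.mul_left (μ0 s0))).congr_fun fun t => ?_).tsum_eq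
  simp only [stateDist_eq_sum_indicator (μ0 := μ0) t, Finset.sum_mul, Finset.mul_sum]
  rw [Finset.sum_congr rfl fun x _ => Finset.sum_comm, Finset.sum_comm]
  exact Finset.sum_congr rfl fun s0 _ => Finset.sum_congr rfl fun s _ =>
    Finset.sum_congr rfl fun a _ => by ring

theorem ret_eq_add_mul_ret_stateDist_one (hT : IsKernel T) (hπ : IsPolicy π) (hμ : IsDist μ0)
    (hγ0 : 0 ≤ γ) (hγ1 : γ < 1) (r : S → A → ℝ) :
    ret γ T π μ0 r
      = ∑ s, ∑ a, μ0 s * π s a * r s a + γ * ret γ T π (stateDist T π μ0 1) r := by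
  rw [ret, (hasSum_expOcc hT hπ hμ hγ0 hγ1 r).summable.tsum_eq_zero_add, ret, ← tsum_mul_left]
  congr 1
  · rw [pow_zero, one_mul]; rfl
  · exact tsum_congr fun t => by rw [stateDist_succ_eq_stateDist_one, pow_succ]; ring

def bellmanOp (γ : ℝ) (T : S → A → S → ℝ) (π : S → A → ℝ) (f : S → A → ℝ) (V : S → ℝ)
    (s : S) : ℝ :=
  ∑ a, π s a * (f s a + γ * ∑ s', T s a s' * V s')

theorem sum_stateDist_mul_bellmanOp (t : ℕ) (f : S → A → ℝ) (V : S → ℝ) :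
    ∑ s, stateDist T π μ0 t s * bellmanOp γ T π f V s
      = ∑ s, ∑ a, stateDist T π μ0 t s * π s a * f s a
        + γ * ∑ s', stateDist T π μ0 (t + 1) s' * V s' := by
  simp only [bellmanOp, stateDist, mul_add, Finset.sum_add_distrib, Finset.mul_sum, Finset.sum_mul]
  congr 1
  · simp only [mul_assoc]
  · rw [Finset.sum_comm (s := Finset.univ (α := S)) (t := Finset.univ (α := S))]
    refine Finset.sum_congr rfl fun s _ => ?_
    rw [Finset.sum_comm]
    exact Finset.sum_congr rfl fun a _ => Finset.sum_congr rfl fun s' _ => by ring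

theorem ret_eq_sum_mul_bellmanOp_value (hT : IsKernel T) (hπ : IsPolicy π) (hμ : IsDist μ0)
    (hγ0 : 0 ≤ γ) (hγ1 : γ < 1) (r : S → A → ℝ) :
    ret γ T π μ0 r = ∑ s, μ0 s * bellmanOp γ T π r (value γ T π r) s := by
  rw [ret_eq_add_mul_ret_stateDist_one hT hπ hμ hγ0 hγ1, ret_eq_sum_mul_value hT hπ hγ0 hγ1]
  exact (sum_stateDist_mul_bellmanOp 0 r _).symm

theorem bellmanOp_value (hT : IsKernel T) (hπ : IsPolicy π) (hγ0 : 0 ≤ γ) (hγ1 : γ < 1)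
    (r : S → A → ℝ) :
    bellmanOp γ T π r (value γ T π r) = value γ T π r := by
  funext s0
  simpa [value] using (ret_eq_sum_mul_bellmanOp_value hT hπ (isDist_indicator s0) hγ0 hγ1 r).symm

theorem bellmanOp_sub_Gpi_value (hT : IsKernel T) (hπ : IsPolicy π) (hγ0 : 0 ≤ γ) (hγ1 : γ < 1)
    (r : S → A → ℝ) :
    bellmanOp γ Th π (fun s a => r s a - γ * Gpi γ T Th π r s a) (value γ T π r)
      = value γ T π r := by
  conv_rhs => rw [← bellmanOp_value hT hπ hγ0 hγ1 r]
  funext s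
  simp only [bellmanOp, Gpi]
  exact Finset.sum_congr rfl fun a _ => by ring

theorem sum_mul_eq_expOcc_of_bellmanOp_eq (hT : IsKernel T) (hπ : IsPolicy π) (hμ : IsDist μ0)
    (hγ0 : 0 ≤ γ) (hγ1 : γ < 1) {f : S → A → ℝ} {V : S → ℝ} (hV : bellmanOp γ T π f V = V) :
    ∑ s, μ0 s * V s = expOcc γ T π μ0 f := by
  have hrec : ∀ t, ∑ s, stateDist T π μ0 t s * V s
      = ∑ s, ∑ a, stateDist T π μ0 t s * π s a * f s a
        + γ * ∑ s, stateDist T π μ0 (t + 1) s * V s := fun t => by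
    conv_lhs => rw [← hV]
    exact sum_stateDist_mul_bellmanOp t f V
  have hbdd : ∀ t, |∑ s, stateDist T π μ0 t s * V s| ≤ ∑ s, |V s| := fun t =>
    abs_sum_mul_le_sum_abs (stateDist_nonneg hT hπ hμ.1 t) (stateDist_le_one hT hπ hμ t)
  have hf := hasSum_expOcc hT hπ hμ hγ0 hγ1 f
  exact (hasSum_pow_mul_of_eq_add_mul_succ hγ0 hγ1 hrec hbdd hf.summable).unique hf

theorem ret_eq_expOcc_sub_Gpi (hT : IsKernel T) (hTh : IsKernel Th) (hπ : IsPolicy π)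
    (hμ : IsDist μ0) (hγ0 : 0 ≤ γ) (hγ1 : γ < 1) (r : S → A → ℝ) :
    ret γ T π μ0 r = expOcc γ Th π μ0 (fun s a => r s a - γ * Gpi γ T Th π r s a) := by
  rw [ret_eq_sum_mul_value hT hπ hγ0 hγ1]
  exact sum_mul_eq_expOcc_of_bellmanOp_eq hTh hπ hμ hγ0 hγ1
    (bellmanOp_sub_Gpi_value hT hπ hγ0 hγ1 r)

theorem occupancy_nonneg (hT : IsKernel T) (hπ : IsPolicy π) (hμ : IsDist μ0) (hγ0 : 0 ≤ γ)
    (s : S) (a : A) : 0 ≤ occupancy γ T π μ0 s a :=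
  mul_nonneg (hπ.1 s a) (tsum_nonneg fun t =>
    mul_nonneg (pow_nonneg hγ0 t) (stateDist_nonneg hT hπ hμ.1 t s))

theorem expOcc_sub (f g : S → A → ℝ) :
    expOcc γ T π μ0 (fun s a => f s a - g s a) = expOcc γ T π μ0 f - expOcc γ T π μ0 g := by
  simp only [expOcc, mul_sub, Finset.sum_sub_distrib]

theorem expOcc_const_mul (c : ℝ) (f : S → A → ℝ) :
    expOcc γ T π μ0 (fun s a => c * f s a) = c * expOcc γ T π μ0 f := by
  simp only [expOcc, Finset.mul_sum, mul_left_comm]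

theorem abs_expOcc_le (hT : IsKernel T) (hπ : IsPolicy π) (hμ : IsDist μ0) (hγ0 : 0 ≤ γ)
    {f g : S → A → ℝ} (h : ∀ s a, |f s a| ≤ g s a) :
    |expOcc γ T π μ0 f| ≤ expOcc γ T π μ0 g :=
  (Finset.abs_sum_le_sum_abs _ _).trans <| Finset.sum_le_sum fun s _ =>
    (Finset.abs_sum_le_sum_abs _ _).trans <| Finset.sum_le_sum fun a _ => by
      have hocc := occupancy_nonneg hT hπ hμ hγ0 s a
      rw [abs_mul, abs_of_nonneg hocc]
      exact mul_le_mul_of_nonneg_left (h s a) hocc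

theorem abs_ret_sub_expOcc_le (hT : IsKernel T) (hTh : IsKernel Th) (hπ : IsPolicy π)
    (hμ : IsDist μ0) (hγ0 : 0 ≤ γ) (hγ1 : γ < 1) {r u : S → A → ℝ} {lam : ℝ}
    (hadm : ∀ s a, γ * |Gpi γ T Th π r s a| ≤ lam * u s a) :
    |ret γ T π μ0 r - expOcc γ Th π μ0 r| ≤ lam * expOcc γ Th π μ0 u := by
  rw [ret_eq_expOcc_sub_Gpi hT hTh hπ hμ hγ0 hγ1, expOcc_sub, sub_sub_cancel_left, abs_neg,
    ← expOcc_const_mul]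
  exact abs_expOcc_le hTh hπ hμ hγ0 fun s a => by rw [abs_mul, abs_of_nonneg hγ0]; exact hadm s a

end

theorem mopo_delta_bound_general (γ : ℝ) (hγ0 : 0 < γ) (hγ1 : γ < 1)
    (T Th : S → A → S → ℝ) (hT : IsKernel T) (hTh : IsKernel Th)
    (μ0 : S → ℝ) (hμ : IsDist μ0) (r : S → A → ℝ)
    (u : S → A → ℝ) (lam : ℝ) (hlam : 0 < lam)
    (hadm : ∀ π : S → A → ℝ, IsPolicy π → ∀ s a, γ * |Gpi γ T Th π r s a| ≤ lam * u s a)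
    (πhat : S → A → ℝ) (hπhat : IsPolicy πhat)
    (hopt : ∀ π : S → A → ℝ, IsPolicy π →
      expOcc γ Th π μ0 (fun s a => r s a - lam * u s a)
        ≤ expOcc γ Th πhat μ0 (fun s a => r s a - lam * u s a))
    (δ : ℝ)
    (πδ : S → A → ℝ) (hπδ : IsPolicy πδ) (hπδe : expOcc γ Th πδ μ0 u ≤ δ) :
    ret γ T πhat μ0 r ≥ ret γ T πδ μ0 r - 2 * lam * δ := by
  have hhat := abs_le.1 (abs_ret_sub_expOcc_le hT hTh hπhat hμ hγ0.le hγ1 (hadm πhat hπhat))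
  have hδ := abs_le.1 (abs_ret_sub_expOcc_le hT hTh hπδ hμ hγ0.le hγ1 (hadm πδ hπδ))
  have hpen := hopt πδ hπδ
  rw [expOcc_sub, expOcc_sub, expOcc_const_mul, expOcc_const_mul] at hpen
  linarith [mul_le_mul_of_nonneg_left hπδe hlam.le]

/-- η_M(π̂) ≥ η_M(π^δ) − 2λδ for the best policy π^δ with model error at most δ. -/
theorem mopo_delta_bound (γ : ℝ) (hγ0 : 0 < γ) (hγ1 : γ < 1)
    (T Th : S → A → S → ℝ) (hT : IsKernel T) (hTh : IsKernel Th)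
    (μ0 : S → ℝ) (hμ : IsDist μ0) (r : S → A → ℝ)
    (u : S → A → ℝ) (hu : ∀ s a, 0 ≤ u s a) (lam : ℝ) (hlam : 0 < lam)
    (hadm : ∀ π : S → A → ℝ, IsPolicy π → ∀ s a, γ * |Gpi γ T Th π r s a| ≤ lam * u s a)
    (πhat : S → A → ℝ) (hπhat : IsPolicy πhat)
    (hopt : ∀ π : S → A → ℝ, IsPolicy π →
      expOcc γ Th π μ0 (fun s a => r s a - lam * u s a)
        ≤ expOcc γ Th πhat μ0 (fun s a => r s a - lam * u s a))
    (δ : ℝ)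
    (hδmin : sInf {e : ℝ | ∃ π : S → A → ℝ, IsPolicy π ∧ expOcc γ Th π μ0 u = e} ≤ δ)
    (πδ : S → A → ℝ) (hπδ : IsPolicy πδ) (hπδe : expOcc γ Th πδ μ0 u ≤ δ)
    (hπδopt : ∀ π : S → A → ℝ, IsPolicy π → expOcc γ Th π μ0 u ≤ δ →
      ret γ T π μ0 r ≤ ret γ T πδ μ0 r) :
    ret γ T πhat μ0 r ≥ ret γ T πδ μ0 r - 2 * lam * δ :=
  mopo_delta_bound_general γ hγ0 hγ1 T Th hT hTh μ0 hμ r u lam hlam hadm πhat hπhat hopt δ πδ hπδ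
    hπδe

end MDP
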